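/- For the group G = ⟨⟨a₁, a₃⟩⟩ and U the normal closure of ⟨⟨a₂a₃⁻¹⟩⟩, one has U = { uv⁻¹ : (u,v) ∈ G }, i.e., an element lies in U exactly when it is the 'difference' uv⁻¹ of the two coordinates of some first-level-inactive element (u,v) of G. -/

import Mathlib

open Equiv

/-- Vertices of the infinite rooted binary tree: finite words over `Bool`.
The parent of a nonempty word is `dropLast`. -/
abbrev Wd := List Bool

/-- The group `Ω = Aut(T)` of automorphisms of the infinite rooted binary tree,
realized as the subgroup of permutations of the vertex set preserving length
(levels) and the parent relation. -/
def OmegaSG : Subgroup (Equiv.Perm Wd) where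
  carrier := {σ | (∀ w, (σ w).length = w.length) ∧ ∀ w, (σ w).dropLast = σ w.dropLast}
  one_mem' := ⟨fun _ => rfl, fun _ => rfl⟩
  mul_mem' := by
    rintro σ τ ⟨hσl, hσd⟩ ⟨hτl, hτd⟩
    refine ⟨fun w => ?_, fun w => ?_⟩
    · simp [Equiv.Perm.mul_apply, hσl, hτl]
    · simp [Equiv.Perm.mul_apply, hσd, hτd]
  inv_mem' := by
    rintro σ ⟨hl, hd⟩
    refine ⟨fun w => ?_, fun w => ?_⟩
    · have := hl (σ⁻¹ w)
      rw [show σ (σ⁻¹ w) = w from σ.apply_symm_apply w] at this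
      exact this.symm
    · apply σ.injective
      have := hd (σ⁻¹ w)
      rw [show σ (σ⁻¹ w) = w from σ.apply_symm_apply w] at this
      rw [← this]
      simp

/-- The section pairing: `(u,v)` acts as `u` on the subtree rooted at `false`
and as `v` on the subtree rooted at `true`. -/
def pairFun (f g : Wd → Wd) : Wd → Wd
  | [] => []
  | false :: w => false :: f w
  | true :: w => true :: g w

@[simp] lemma pairFun_nil (f g : Wd → Wd) : pairFun f g [] = [] := rfl
@[simp] lemma pairFun_false (f g : Wd → Wd) (w : Wd) :
    pairFun f g (false :: w) = false :: f w := rfl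
@[simp] lemma pairFun_true (f g : Wd → Wd) (w : Wd) :
    pairFun f g (true :: w) = true :: g w := rfl

lemma pairFun_comp (f g f' g' : Wd → Wd) (hf : ∀ w, f (f' w) = w) (hg : ∀ w, g (g' w) = w) :
    ∀ w, pairFun f g (pairFun f' g' w) = w := by
  rintro (_ | ⟨(_|_), w⟩) <;> simp [hf, hg]

/-- The permutation `(u,v)` of the tree. -/
def pairPerm (u v : Equiv.Perm Wd) : Equiv.Perm Wd where
  toFun := pairFun u v
  invFun := pairFun u.symm v.symm
  left_inv := pairFun_comp _ _ _ _ (fun w => u.symm_apply_apply w) (fun w => v.symm_apply_apply w)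
  right_inv := pairFun_comp _ _ _ _ (fun w => u.apply_symm_apply w) (fun w => v.apply_symm_apply w)

@[simp] lemma pairPerm_apply (u v : Equiv.Perm Wd) (w : Wd) :
    pairPerm u v w = pairFun u v w := rfl

/-- The first-level swap `σ`. -/
def swapPerm : Equiv.Perm Wd where
  toFun w := match w with | [] => [] | b :: w => (!b) :: w
  invFun w := match w with | [] => [] | b :: w => (!b) :: w
  left_inv := by rintro (_ | ⟨b, w⟩) <;> simp
  right_inv := by rintro (_ | ⟨b, w⟩) <;> simp

@[simp] lemma swapPerm_nil : swapPerm [] = [] := rfl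
@[simp] lemma swapPerm_cons (b : Bool) (w : Wd) : swapPerm (b :: w) = (!b) :: w := rfl

lemma swapPerm_mem : swapPerm ∈ OmegaSG := by
  constructor
  · rintro (_ | ⟨b, w⟩) <;> simp
  · rintro (_ | ⟨b, w⟩)
    · simp
    · rcases eq_or_ne w [] with rfl | hw
      · simp
      · simp only [swapPerm_cons, List.dropLast_cons_of_ne_nil hw]

lemma mem_omega_length {u : Equiv.Perm Wd} (hu : u ∈ OmegaSG) (w : Wd) :
    (u w).length = w.length := hu.1 w

lemma mem_omega_ne_nil {u : Equiv.Perm Wd} (hu : u ∈ OmegaSG) {w : Wd} (hw : w ≠ []) :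
    u w ≠ [] := by
  intro h
  exact hw (List.eq_nil_of_length_eq_zero (by rw [← hu.1 w, h]; rfl))

lemma mem_omega_nil {u : Equiv.Perm Wd} (hu : u ∈ OmegaSG) : u [] = [] :=
  List.eq_nil_of_length_eq_zero (hu.1 [])

lemma pairPerm_mem {u v : Equiv.Perm Wd} (hu : u ∈ OmegaSG) (hv : v ∈ OmegaSG) :
    pairPerm u v ∈ OmegaSG := by
  constructor
  · rintro (_ | ⟨(_|_), w⟩) <;> simp [hu.1, hv.1]
  · rintro (_ | ⟨(_|_), w⟩)
    · simp
    · rcases eq_or_ne w [] with rfl | hw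
      · simp [mem_omega_nil hu]
      · simp only [pairPerm_apply, pairFun_false, List.dropLast_cons_of_ne_nil hw,
          List.dropLast_cons_of_ne_nil (mem_omega_ne_nil hu hw)]
        rw [hu.2]
    · rcases eq_or_ne w [] with rfl | hw
      · simp [mem_omega_nil hv]
      · simp only [pairPerm_apply, pairFun_true, List.dropLast_cons_of_ne_nil hw,
          List.dropLast_cons_of_ne_nil (mem_omega_ne_nil hv hw)]
        rw [hv.2]

/-- `(u,v)` as an element of `Ω`. -/
def pairOm (u v : OmegaSG) : OmegaSG := ⟨pairPerm u.1 v.1, pairPerm_mem u.2 v.2⟩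

/-- `σ` as an element of `Ω`. -/
def swapOm : OmegaSG := ⟨swapPerm, swapPerm_mem⟩

/-! ### Levels, restriction, sign, odometers -/

/-- Level `n` of the tree: words of length `n`. -/
abbrev Lv (n : ℕ) := {w : Wd // w.length = n}

instance fintypeLv (n : ℕ) : Fintype (Lv n) := by
  apply Fintype.ofSurjective (fun g : Fin n → Bool => (⟨List.ofFn g, List.length_ofFn⟩ : Lv n))
  rintro ⟨w, rfl⟩
  exact ⟨w.get, Subtype.ext (List.ofFn_get w)⟩

/-- The permutation induced by `g ∈ Ω` on level `n`. -/
def levelPerm (n : ℕ) (g : OmegaSG) : Equiv.Perm (Lv n) where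
  toFun w := ⟨g.1 w.1, by rw [mem_omega_length g.2, w.2]⟩
  invFun w := ⟨(g⁻¹ : OmegaSG).1 w.1, by rw [mem_omega_length (g⁻¹ : OmegaSG).2, w.2]⟩
  left_inv w := Subtype.ext (by simp)
  right_inv w := Subtype.ext (by simp)

/-- Restriction to level `n` as a group homomorphism. -/
def levelHom (n : ℕ) : OmegaSG →* Equiv.Perm (Lv n) where
  toFun := levelPerm n
  map_one' := Equiv.ext fun w => Subtype.ext rfl
  map_mul' g h := Equiv.ext fun w => Subtype.ext rfl

/-- `sgn_n`: the sign of the permutation induced on level `n`. -/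
noncomputable def sgn (n : ℕ) (g : OmegaSG) : ℤˣ := Equiv.Perm.sign (levelPerm n g)

/-- An odometer: an element acting transitively on every level of the tree. -/
def IsOdometer (g : OmegaSG) : Prop :=
  ∀ n : ℕ, ∀ v w : Lv n, ∃ k : ℤ, ((g ^ k : OmegaSG) : Equiv.Perm Wd) v.1 = w.1

/-! ### The profinite topology on `Aut(T)` -/

instance : TopologicalSpace Wd := ⊥
instance : DiscreteTopology Wd := ⟨rfl⟩
instance : TopologicalSpace (Equiv.Perm Wd) :=
  TopologicalSpace.induced (fun g => (g : Wd → Wd)) Pi.topologicalSpace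

lemma continuous_permCoe : Continuous (fun g : Equiv.Perm Wd => (g : Wd → Wd)) :=
  continuous_induced_dom

lemma continuous_permApply (w : Wd) : Continuous fun g : Equiv.Perm Wd => g w :=
  (continuous_apply w).comp continuous_permCoe

instance : IsTopologicalGroup (Equiv.Perm Wd) where
  continuous_mul := by
    apply continuous_induced_rng.2
    apply continuous_pi
    intro w
    rw [continuous_discrete_rng]
    intro y
    have h : (fun p : Equiv.Perm Wd × Equiv.Perm Wd => ((p.1 * p.2 : Equiv.Perm Wd) : Wd → Wd) w) ⁻¹' {y}
        = ⋃ x : Wd, {p : Equiv.Perm Wd × Equiv.Perm Wd | p.2 w = x} ∩ {p | p.1 x = y} := by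
      ext p
      simp only [Set.mem_preimage, Set.mem_singleton_iff, Set.mem_iUnion, Set.mem_inter_iff,
        Set.mem_setOf_eq, Equiv.Perm.mul_apply]
      constructor
      · intro hh; exact ⟨p.2 w, rfl, hh⟩
      · rintro ⟨x, rfl, hh⟩; exact hh
    show IsOpen ((fun p : Equiv.Perm Wd × Equiv.Perm Wd =>
      ((p.1 * p.2 : Equiv.Perm Wd) : Wd → Wd) w) ⁻¹' {y})
    rw [h]
    refine isOpen_iUnion fun x => IsOpen.inter ?_ ?_
    · exact IsOpen.preimage ((continuous_permApply w).comp continuous_snd) (isOpen_discrete {x})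
    · exact IsOpen.preimage ((continuous_permApply x).comp continuous_fst) (isOpen_discrete {y})
  continuous_inv := by
    apply continuous_induced_rng.2
    apply continuous_pi
    intro w
    rw [continuous_discrete_rng]
    intro y
    have h : (fun g : Equiv.Perm Wd => ((g⁻¹ : Equiv.Perm Wd) : Wd → Wd) w) ⁻¹' {y}
        = {g : Equiv.Perm Wd | g y = w} := by
      ext g
      simp only [Set.mem_preimage, Set.mem_singleton_iff, Set.mem_setOf_eq]
      constructor
      · rintro rfl; simp
      · intro hh; rw [← hh]; simp
    show IsOpen ((fun g : Equiv.Perm Wd => ((g⁻¹ : Equiv.Perm Wd) : Wd → Wd) w) ⁻¹' {y})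
    rw [h]
    exact IsOpen.preimage (continuous_permApply y) (isOpen_discrete {w})

/-! ### The recursive generators `a₁ = σ`, `a₂ = (a₃⁻¹, a₂⁻¹)σ`, `a₃ = (a₂, a₃)` -/

mutual
  /-- The underlying function of `a₂`. -/
  def pA : Wd → Wd
    | [] => []
    | false :: w => true :: piA w
    | true :: w => false :: qiA w
  /-- The underlying function of `a₃`. -/
  def qA : Wd → Wd
    | [] => []
    | false :: w => false :: pA w
    | true :: w => true :: qA w
  /-- The underlying function of `a₂⁻¹`. -/
  def piA : Wd → Wd
    | [] => []
    | false :: w => true :: qA w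
    | true :: w => false :: pA w
  /-- The underlying function of `a₃⁻¹`. -/
  def qiA : Wd → Wd
    | [] => []
    | false :: w => false :: piA w
    | true :: w => true :: qiA w
end

lemma a_inv_lemma : ∀ w : Wd, pA (piA w) = w ∧ piA (pA w) = w ∧ qA (qiA w) = w ∧ qiA (qA w) = w := by
  intro w
  induction w with
  | nil => simp [pA, qA, piA, qiA]
  | cons b w ih =>
    cases b <;>
      simp [pA, qA, piA, qiA, ih.1, ih.2.1, ih.2.2.1, ih.2.2.2]

/-- The generator `a₂`. -/
def a2 : Equiv.Perm Wd where
  toFun := pA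
  invFun := piA
  left_inv w := (a_inv_lemma w).2.1
  right_inv w := (a_inv_lemma w).1

/-- The generator `a₃`. -/
def a3 : Equiv.Perm Wd where
  toFun := qA
  invFun := qiA
  left_inv w := (a_inv_lemma w).2.2.2
  right_inv w := (a_inv_lemma w).2.2.1

lemma a_length_lemma : ∀ w : Wd, (pA w).length = w.length ∧ (qA w).length = w.length ∧
    (piA w).length = w.length ∧ (qiA w).length = w.length := by
  intro w
  induction w with
  | nil => simp [pA, qA, piA, qiA]
  | cons b w ih =>
    cases b <;>
      simp [pA, qA, piA, qiA, ih.1, ih.2.1, ih.2.2.1, ih.2.2.2]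

lemma a_ne_nil {f : Wd → Wd} (hf : ∀ w : Wd, (f w).length = w.length) {w : Wd} (hw : w ≠ []) :
    f w ≠ [] := by
  intro h
  exact hw (List.eq_nil_of_length_eq_zero (by rw [← hf w, h]; rfl))

lemma a_dropLast_lemma : ∀ w : Wd, (pA w).dropLast = pA w.dropLast ∧
    (qA w).dropLast = qA w.dropLast ∧ (piA w).dropLast = piA w.dropLast ∧
    (qiA w).dropLast = qiA w.dropLast := by
  intro w
  induction w with
  | nil => simp [pA, qA, piA, qiA]
  | cons b w ih =>
    rcases eq_or_ne w [] with rfl | hw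
    · cases b <;> simp [pA, qA, piA, qiA]
    · have hp := a_ne_nil (fun w => (a_length_lemma w).1) hw
      have hq := a_ne_nil (fun w => (a_length_lemma w).2.1) hw
      have hpi := a_ne_nil (fun w => (a_length_lemma w).2.2.1) hw
      have hqi := a_ne_nil (fun w => (a_length_lemma w).2.2.2) hw
      cases b <;>
        simp [pA, qA, piA, qiA, List.dropLast_cons_of_ne_nil hw,
          List.dropLast_cons_of_ne_nil hp, List.dropLast_cons_of_ne_nil hq,
          List.dropLast_cons_of_ne_nil hpi, List.dropLast_cons_of_ne_nil hqi,
          ih.1, ih.2.1, ih.2.2.1, ih.2.2.2]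

lemma a2_mem : a2 ∈ OmegaSG :=
  ⟨fun w => (a_length_lemma w).1, fun w => (a_dropLast_lemma w).1⟩

lemma a3_mem : a3 ∈ OmegaSG :=
  ⟨fun w => (a_length_lemma w).2.1, fun w => (a_dropLast_lemma w).2.1⟩

/-- `a₁ = σ` as an element of `Ω`. -/
def A1 : OmegaSG := swapOm
/-- `a₂` as an element of `Ω`. -/
def A2 : OmegaSG := ⟨a2, a2_mem⟩
/-- `a₃` as an element of `Ω`. -/
def A3 : OmegaSG := ⟨a3, a3_mem⟩

/-- `G = ⟨⟨a₁, a₃⟩⟩`, the topological closure of the subgroup generated by `a₁` and `a₃`: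
a model of the geometric iterated monodromy group of `f(x) = 2/(x-1)²`. -/
noncomputable def Ggrp : Subgroup OmegaSG :=
  (Subgroup.closure {A1, A3}).topologicalClosure

/-- The normal closure in `G` of the closed subgroup generated by an element `c`:
the closed subgroup generated by all `G`-conjugates of `c`. -/
noncomputable def nclG (c : OmegaSG) : Subgroup OmegaSG :=
  (Subgroup.closure {x | ∃ g ∈ Ggrp, x = g * c * g⁻¹}).topologicalClosure

/-- `U`, the normal closure in `G` of `⟨⟨a₂a₃⁻¹⟩⟩`. -/
noncomputable def Ugrp : Subgroup OmegaSG := nclG (A2 * A3⁻¹)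

/-- `H₁`, the normal closure in `G` of `⟨⟨a₁⟩⟩`. -/
noncomputable def H1grp : Subgroup OmegaSG := nclG A1

/-- `H₃`, the normal closure in `G` of `⟨⟨a₃⟩⟩`. -/
noncomputable def H3grp : Subgroup OmegaSG := nclG A3

/-! ### Auxiliary development -/

lemma omega_ext {x y : OmegaSG} (h : ∀ w, (x : Equiv.Perm Wd) w = (y : Equiv.Perm Wd) w) :
    x = y := Subtype.ext (Equiv.ext h)

@[simp] lemma omega_mul_apply (x y : OmegaSG) (w : Wd) :
    ((x * y : OmegaSG) : Equiv.Perm Wd) w = (x : Equiv.Perm Wd) ((y : Equiv.Perm Wd) w) := rfl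

@[simp] lemma pairOm_apply (u v : OmegaSG) (w : Wd) :
    ((pairOm u v : OmegaSG) : Equiv.Perm Wd) w = pairFun (u : Equiv.Perm Wd) (v : Equiv.Perm Wd) w := rfl

@[simp] lemma A1_apply (w : Wd) : ((A1 : OmegaSG) : Equiv.Perm Wd) w = swapPerm w := rfl

lemma pairOm_mul (u v u' v' : OmegaSG) :
    pairOm (u * u') (v * v') = pairOm u v * pairOm u' v' := by
  apply omega_ext
  rintro (_ | ⟨(_|_), w⟩) <;> simp

lemma pairOm_one : pairOm 1 1 = (1 : OmegaSG) := by
  apply omega_ext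
  rintro (_ | ⟨(_|_), w⟩) <;> simp <;> rfl

/-- `pairOm` as a group homomorphism. -/
def pairHom : OmegaSG × OmegaSG →* OmegaSG where
  toFun p := pairOm p.1 p.2
  map_one' := pairOm_one
  map_mul' p q := pairOm_mul _ _ _ _

@[simp] lemma pairHom_apply (u v : OmegaSG) : pairHom (u, v) = pairOm u v := rfl

lemma pairOm_inv (u v : OmegaSG) : pairOm u⁻¹ v⁻¹ = (pairOm u v)⁻¹ := by
  exact map_inv pairHom (u, v)

lemma pairOm_inj {u v u' v' : OmegaSG} (h : pairOm u v = pairOm u' v') : u = u' ∧ v = v' := by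
  constructor <;> apply omega_ext <;> intro w
  · have := congrArg (fun z : OmegaSG => (z : Equiv.Perm Wd) (false :: w)) h
    simpa using this
  · have := congrArg (fun z : OmegaSG => (z : Equiv.Perm Wd) (true :: w)) h
    simpa using this

lemma A1_mul_A1 : A1 * A1 = (1 : OmegaSG) := by
  apply omega_ext
  rintro (_ | ⟨(_|_), w⟩) <;> rfl

lemma A1_inv : A1⁻¹ = A1 := by
  rw [inv_eq_iff_mul_eq_one, A1_mul_A1]

lemma A1_conj (u v : OmegaSG) : A1 * pairOm u v * A1 = pairOm v u := by
  apply omega_ext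
  rintro (_ | ⟨(_|_), w⟩) <;> rfl

lemma A3_eq : A3 = pairOm A2 A3 := by
  apply omega_ext
  rintro (_ | ⟨(_|_), w⟩) <;> rfl

lemma A2_eq : A2 = A1 * A3⁻¹ := by
  apply omega_ext
  rintro (_ | ⟨(_|_), w⟩) <;> rfl
/-! ### Key identities among the generators -/

lemma eq_one_of_pair_one {g : OmegaSG} (h : g = pairOm 1 g) : g = 1 := by
  apply omega_ext
  intro w
  induction w with
  | nil => simpa using mem_omega_nil g.2
  | cons bb w ih =>
    have hb := congrArg (fun z : OmegaSG => (z : Equiv.Perm Wd) (bb :: w)) h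
    cases bb
    · simpa using hb
    · rw [hb]
      simpa using ih

lemma A3_inv_eq : A3⁻¹ = pairOm A2⁻¹ A3⁻¹ := by
  conv_lhs => rw [A3_eq]
  rw [pairOm_inv]

lemma ba_eq : A2 * A3 = A1 := by
  rw [A2_eq, inv_mul_cancel_right]

lemma sq_halfpair : (pairOm A1 (A3 * A1 * A3⁻¹)) * (pairOm A1 (A3 * A1 * A3⁻¹)) = 1 := by
  rw [← pairOm_mul, A1_mul_A1]
  have h : A3 * A1 * A3⁻¹ * (A3 * A1 * A3⁻¹) = 1 := by
    have h2 : A3 * A1 * A3⁻¹ * (A3 * A1 * A3⁻¹) = A3 * (A1 * A1) * A3⁻¹ := by group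
    rw [h2, A1_mul_A1, mul_one, mul_inv_cancel]
  rw [h, pairOm_one]

lemma sA3is : A1 * A3⁻¹ * A1 = pairOm A3⁻¹ A2⁻¹ := by
  conv_lhs => rw [A3_inv_eq]
  exact A1_conj A2⁻¹ A3⁻¹

lemma sA3s : A1 * A3 * A1 = pairOm A3 A2 := by
  conv_lhs => rw [A3_eq]
  exact A1_conj A2 A3

lemma A2_sq : A2 * A2 = pairOm A1 (A3 * A1 * A3⁻¹) := by
  have h2 : A3⁻¹ * A2⁻¹ = A1 := by
    rw [A2_eq, show A3⁻¹ * (A1 * A3⁻¹)⁻¹ = A3⁻¹ * A3 * A1⁻¹ by group, A1_inv]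
    group
  have h3 : A2⁻¹ * A3⁻¹ = A3 * A1 * A3⁻¹ := by
    rw [A2_eq, show (A1 * A3⁻¹)⁻¹ * A3⁻¹ = A3 * (A1⁻¹ * A3⁻¹) by group, A1_inv]
    group
  calc A2 * A2 = (A1 * A3⁻¹ * A1) * A3⁻¹ := by rw [A2_eq]; group
    _ = pairOm A3⁻¹ A2⁻¹ * pairOm A2⁻¹ A3⁻¹ := by
        rw [sA3is]
        conv_rhs => rw [← A3_inv_eq]
    _ = pairOm (A3⁻¹ * A2⁻¹) (A2⁻¹ * A3⁻¹) := by rw [← pairOm_mul]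
    _ = pairOm A1 (A3 * A1 * A3⁻¹) := by rw [h2, h3]

lemma A2_pow4 : A2 * A2 * (A2 * A2) = 1 := by
  rw [A2_sq, sq_halfpair]

lemma A3_pow4 : A3 * A3 * (A3 * A3) = 1 := by
  have key : A3 * A3 * (A3 * A3) = pairOm 1 (A3 * A3 * (A3 * A3)) := by
    conv_lhs => rw [A3_eq]
    rw [← pairOm_mul, ← pairOm_mul, A2_pow4]
  exact eq_one_of_pair_one key

lemma as_sq : (A3 * A1) * (A3 * A1) = pairOm A1 (A3 * A1 * A3⁻¹) := by
  calc (A3 * A1) * (A3 * A1) = A3 * (A1 * A3 * A1) := by group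
    _ = pairOm A2 A3 * pairOm A3 A2 := by
        rw [sA3s, ← A3_eq]
    _ = pairOm (A2 * A3) (A3 * A2) := by rw [← pairOm_mul]
    _ = pairOm A1 (A3 * A1 * A3⁻¹) := by
        rw [ba_eq]
        congr 1
        rw [← ba_eq]
        group

lemma as_pow4 : (A3 * A1) * (A3 * A1) * ((A3 * A1) * (A3 * A1)) = 1 := by
  rw [as_sq, sq_halfpair]
/-! ### Consequences in an abstract group -/

section AbstractRel
variable {GG : Type*} [Group GG]

lemma rel_inv3 {a : GG} (ha : a * a * (a * a) = 1) : a⁻¹ * a⁻¹ * a⁻¹ = a := by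
  rw [← mul_one (a⁻¹ * a⁻¹ * a⁻¹), ← ha]; group

lemma rel_inv2 {a : GG} (ha : a * a * (a * a) = 1) : a⁻¹ * a⁻¹ = a * a := by
  calc a⁻¹ * a⁻¹ = a⁻¹ * a⁻¹ * a⁻¹ * a := by group
    _ = a * a := by rw [rel_inv3 ha]

lemma rel_E {s a : GG} (hs : s * s = 1) (ht : (a * s) * (a * s) * ((a * s) * (a * s)) = 1) :
    a * s * (a * s) = s * a⁻¹ * (s * a⁻¹) := by
  have hsi : s⁻¹ = s := inv_eq_of_mul_eq_one_left hs
  calc a * s * (a * s) = ((a * s) * (a * s))⁻¹ := eq_inv_of_mul_eq_one_left ht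
    _ = s⁻¹ * a⁻¹ * (s⁻¹ * a⁻¹) := by group
    _ = s * a⁻¹ * (s * a⁻¹) := by rw [hsi]

lemma rel_comm {s a : GG} (hs : s * s = 1) (ha : a * a * (a * a) = 1)
    (ht : (a * s) * (a * s) * ((a * s) * (a * s)) = 1) :
    (s * a⁻¹ * a⁻¹) * (a⁻¹ * (s * a⁻¹)) = (a⁻¹ * (s * a⁻¹)) * (s * a⁻¹ * a⁻¹) := by
  have h3 := rel_inv3 ha
  have hE := rel_E hs ht
  calc (s * a⁻¹ * a⁻¹) * (a⁻¹ * (s * a⁻¹)) = s * (a⁻¹ * a⁻¹ * a⁻¹) * (s * a⁻¹) := by group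
    _ = s * a * (s * a⁻¹) := by rw [h3]
    _ = a⁻¹ * (a * s * (a * s)) * a⁻¹ := by group
    _ = a⁻¹ * (s * a⁻¹ * (s * a⁻¹)) * a⁻¹ := by rw [hE]
    _ = (a⁻¹ * (s * a⁻¹)) * (s * a⁻¹ * a⁻¹) := by group

lemma rel_s_g1 {s a : GG} (hs : s * s = 1) (ha : a * a * (a * a) = 1) :
    s * (s * a⁻¹ * a⁻¹) * s⁻¹ = (s * a⁻¹ * a⁻¹)⁻¹ := by
  have h2 := rel_inv2 ha
  calc s * (s * a⁻¹ * a⁻¹) * s⁻¹ = s * s * (a⁻¹ * a⁻¹) * s⁻¹ := by group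
    _ = a⁻¹ * a⁻¹ * s⁻¹ := by rw [hs]; group
    _ = a * a * s⁻¹ := by rw [h2]
    _ = (s * a⁻¹ * a⁻¹)⁻¹ := by simp [mul_inv_rev, mul_assoc]

lemma rel_s_g2 {s a : GG} (hs : s * s = 1)
    (ht : (a * s) * (a * s) * ((a * s) * (a * s)) = 1) :
    s * (a⁻¹ * (s * a⁻¹)) * s⁻¹ = (a⁻¹ * (s * a⁻¹))⁻¹ := by
  have hE := rel_E hs ht
  have hsi : s⁻¹ = s := inv_eq_of_mul_eq_one_left hs
  calc s * (a⁻¹ * (s * a⁻¹)) * s⁻¹ = s * a⁻¹ * (s * a⁻¹) * s⁻¹ := by group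
    _ = a * s * (a * s) * s⁻¹ := by rw [← hE]
    _ = a * s * (a * s) * s := by rw [hsi]
    _ = a * s * a * (s * s) := by group
    _ = a * s * a := by rw [hs, mul_one]
    _ = (a⁻¹ * (s * a⁻¹))⁻¹ := by simp [mul_inv_rev, mul_assoc, hsi]

lemma rel_a_g1 {s a : GG} (hs : s * s = 1) (ha : a * a * (a * a) = 1) :
    a * (s * a⁻¹ * a⁻¹) * a⁻¹ = (a⁻¹ * (s * a⁻¹))⁻¹ := by
  have h3 := rel_inv3 ha
  have hsi : s⁻¹ = s := inv_eq_of_mul_eq_one_left hs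
  calc a * (s * a⁻¹ * a⁻¹) * a⁻¹ = a * s * (a⁻¹ * a⁻¹ * a⁻¹) := by group
    _ = a * s * a := by rw [h3]
    _ = (a⁻¹ * (s * a⁻¹))⁻¹ := by simp [mul_inv_rev, mul_assoc, hsi]

lemma rel_a_g2 {GG : Type*} [Group GG] (s a : GG) :
    a * (a⁻¹ * (s * a⁻¹)) * a⁻¹ = s * a⁻¹ * a⁻¹ := by group

lemma rel_ai_g1 {GG : Type*} [Group GG] (s a : GG) :
    a⁻¹ * (s * a⁻¹ * a⁻¹) * a = a⁻¹ * (s * a⁻¹) := by group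

lemma rel_ai_g2 {s a : GG} (hs : s * s = 1) (ha : a * a * (a * a) = 1) :
    a⁻¹ * (a⁻¹ * (s * a⁻¹)) * a = (s * a⁻¹ * a⁻¹)⁻¹ := by
  have h2 := rel_inv2 ha
  have hsi : s⁻¹ = s := inv_eq_of_mul_eq_one_left hs
  calc a⁻¹ * (a⁻¹ * (s * a⁻¹)) * a = a⁻¹ * a⁻¹ * s := by group
    _ = a * a * s := by rw [h2]
    _ = (s * a⁻¹ * a⁻¹)⁻¹ := by simp [mul_inv_rev, mul_assoc, hsi]

/-- `c₂ = b·b·a⁻¹·a⁻¹ = γ₂⁻¹γ₁` where `b = s a⁻¹`. -/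
lemma rel_c2 {s a : GG} (hs : s * s = 1)
    (ht : (a * s) * (a * s) * ((a * s) * (a * s)) = 1) :
    (s * a⁻¹) * (s * a⁻¹) * (a⁻¹ * a⁻¹) = (a⁻¹ * (s * a⁻¹))⁻¹ * (s * a⁻¹ * a⁻¹) := by
  have hE := rel_E hs ht
  have hsi : s⁻¹ = s := inv_eq_of_mul_eq_one_left hs
  calc (s * a⁻¹) * (s * a⁻¹) * (a⁻¹ * a⁻¹) = s * a⁻¹ * (s * a⁻¹) * (a⁻¹ * a⁻¹) := by group
    _ = a * s * (a * s) * (a⁻¹ * a⁻¹) := by rw [← hE]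
    _ = a * s * a * (s * a⁻¹ * a⁻¹) := by group
    _ = (a⁻¹ * (s * a⁻¹))⁻¹ * (s * a⁻¹ * a⁻¹) := by simp [mul_inv_rev, mul_assoc, hsi]

/-- `c₃ = b·b·b·a⁻¹·a⁻¹·a⁻¹ = γ₂⁻¹` where `b = s a⁻¹`. -/
lemma rel_c3 {s a : GG} (hs : s * s = 1) (ha : a * a * (a * a) = 1)
    (ht : (a * s) * (a * s) * ((a * s) * (a * s)) = 1) :
    (s * a⁻¹) * (s * a⁻¹) * (s * a⁻¹) * (a⁻¹ * a⁻¹ * a⁻¹) = (a⁻¹ * (s * a⁻¹))⁻¹ := by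
  have hE := rel_E hs ht
  have h3 := rel_inv3 ha
  have hsi : s⁻¹ = s := inv_eq_of_mul_eq_one_left hs
  calc (s * a⁻¹) * (s * a⁻¹) * (s * a⁻¹) * (a⁻¹ * a⁻¹ * a⁻¹)
      = (s * a⁻¹) * (s * a⁻¹) * (s * a⁻¹) * a := by rw [h3]
    _ = s * a⁻¹ * (s * a⁻¹) * s := by group
    _ = a * s * (a * s) * s := by rw [← hE]
    _ = a * s * a * (s * s) := by group
    _ = a * s * a := by rw [hs, mul_one]
    _ = (a⁻¹ * (s * a⁻¹))⁻¹ := by simp [mul_inv_rev, mul_assoc, hsi]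

end AbstractRel
/-! ### Compactness of `Ω` -/

lemma isEmbedding_permCoe : Topology.IsEmbedding (fun g : Equiv.Perm Wd => (g : Wd → Wd)) :=
  ⟨⟨rfl⟩, fun _ _ h => Equiv.coe_fn_injective h⟩

instance : T2Space (Equiv.Perm Wd) := isEmbedding_permCoe.t2Space

/-- The closed set of level/parent-preserving levelwise-surjective functions. -/
def OmFun : Set (Wd → Wd) :=
  {f | (∀ w, (f w).length = w.length) ∧ (∀ w, (f w).dropLast = f w.dropLast) ∧
    ∀ v : Wd, ∃ u : Wd, u.length = v.length ∧ f u = v}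

lemma image_omega_eq : (fun g : Equiv.Perm Wd => (g : Wd → Wd)) '' OmegaSG = OmFun := by
  ext f
  constructor
  · rintro ⟨g, ⟨hl, hd⟩, rfl⟩
    refine ⟨hl, hd, fun v => ⟨g⁻¹ v, ?_, by simp⟩⟩
    have h := hl (g⁻¹ v)
    rw [show g (g⁻¹ v) = v from g.apply_symm_apply v] at h
    exact h.symm
  · rintro ⟨hl, hd, hsurj⟩
    have hinj : Function.Injective f := by
      intro u u' huu
      have hlen : u.length = u'.length := by
        rw [← hl u, ← hl u', huu]
      set n := u.length with hn
      let F : Lv n → Lv n := fun x => ⟨f x.1, by rw [hl, x.2]⟩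
      have hFsurj : Function.Surjective F := by
        rintro ⟨v, hv⟩
        obtain ⟨u'', hu1, hu2⟩ := hsurj v
        exact ⟨⟨u'', by rw [hu1, hv]⟩, Subtype.ext hu2⟩
      have hFinj : Function.Injective F := Finite.injective_iff_surjective.mpr hFsurj
      have : F ⟨u, rfl⟩ = F ⟨u', hlen.symm⟩ := Subtype.ext huu
      simpa using congrArg Subtype.val (hFinj this)
    have hsurj' : Function.Surjective f := fun v => by
      obtain ⟨u, _, hu⟩ := hsurj v
      exact ⟨u, hu⟩
    exact ⟨Equiv.ofBijective f ⟨hinj, hsurj'⟩, ⟨hl, hd⟩, rfl⟩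

lemma isClosed_omFun : IsClosed OmFun := by
  have h1 : IsClosed {f : Wd → Wd | ∀ w, (f w).length = w.length} := by
    rw [show {f : Wd → Wd | ∀ w, (f w).length = w.length}
        = ⋂ w : Wd, {f : Wd → Wd | (f w).length = w.length} by ext; simp]
    exact isClosed_iInter fun w => isClosed_eq
      ((continuous_of_discreteTopology (α := Wd) (β := ℕ)).comp (continuous_apply w))
      continuous_const
  have h2 : IsClosed {f : Wd → Wd | ∀ w, (f w).dropLast = f w.dropLast} := by
    rw [show {f : Wd → Wd | ∀ w, (f w).dropLast = f w.dropLast}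
        = ⋂ w : Wd, {f : Wd → Wd | (f w).dropLast = f w.dropLast} by ext; simp]
    exact isClosed_iInter fun w => isClosed_eq
      ((continuous_of_discreteTopology (α := Wd) (β := Wd)).comp (continuous_apply w))
      (continuous_apply w.dropLast)
  have h3 : IsClosed {f : Wd → Wd | ∀ v : Wd, ∃ u : Wd, u.length = v.length ∧ f u = v} := by
    rw [show {f : Wd → Wd | ∀ v : Wd, ∃ u : Wd, u.length = v.length ∧ f u = v}
        = ⋂ v : Wd, ⋃ u ∈ {u : Wd | u.length = v.length}, {f : Wd → Wd | f u = v} by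
      ext; simp]
    refine isClosed_iInter fun v => Set.Finite.isClosed_biUnion (List.finite_length_eq _ _)
      fun u _ => isClosed_eq (continuous_apply u) continuous_const
  exact h1.inter (h2.inter h3)

lemma isCompact_omega : IsCompact (OmegaSG : Set (Equiv.Perm Wd)) := by
  rw [isEmbedding_permCoe.isCompact_iff, image_omega_eq]
  have hsub : OmFun ⊆ Set.pi Set.univ (fun w : Wd => {v : Wd | v.length = w.length}) := by
    intro f hf w _
    exact hf.1 w
  have hpi : IsCompact (Set.pi Set.univ (fun w : Wd => {v : Wd | v.length = w.length})) :=
    isCompact_univ_pi fun w => (List.finite_length_eq _ _).isCompact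
  exact hpi.of_isClosed_subset isClosed_omFun hsub

instance : CompactSpace OmegaSG := isCompact_iff_compactSpace.mp isCompact_omega
/-! ### Topological lemmas on `Ω` -/

lemma continuous_pairPermFun :
    Continuous (fun p : OmegaSG × OmegaSG => (pairPerm p.1.1 p.2.1 : Equiv.Perm Wd)) := by
  apply continuous_induced_rng.2
  apply continuous_pi
  rintro (_ | ⟨(_|_), w'⟩)
  · exact continuous_const
  · show Continuous ((fun x : Wd => (false : Bool) :: x) ∘
      (fun p : OmegaSG × OmegaSG => ((p.1 : Equiv.Perm Wd) : Wd → Wd) w'))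
    exact continuous_of_discreteTopology.comp
      ((continuous_apply w').comp (continuous_permCoe.comp
        (continuous_subtype_val.comp continuous_fst)))
  · show Continuous ((fun x : Wd => (true : Bool) :: x) ∘
      (fun p : OmegaSG × OmegaSG => ((p.2 : Equiv.Perm Wd) : Wd → Wd) w'))
    exact continuous_of_discreteTopology.comp
      ((continuous_apply w').comp (continuous_permCoe.comp
        (continuous_subtype_val.comp continuous_snd)))

lemma continuous_pairOmFun : Continuous (fun p : OmegaSG × OmegaSG => pairOm p.1 p.2) :=
  Continuous.subtype_mk continuous_pairPermFun _

lemma isClosed_Ggrp : IsClosed (Ggrp : Set OmegaSG) :=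
  Subgroup.isClosed_topologicalClosure _

lemma isClosed_Ugrp : IsClosed (Ugrp : Set OmegaSG) :=
  Subgroup.isClosed_topologicalClosure _

/-- The target set `S`. -/
def Sset : Set OmegaSG := {z : OmegaSG | ∃ u v : OmegaSG, pairOm u v ∈ Ggrp ∧ z = u * v⁻¹}

lemma isClosed_Sset : IsClosed Sset := by
  have hK : IsClosed {p : OmegaSG × OmegaSG | pairOm p.1 p.2 ∈ Ggrp} :=
    IsClosed.preimage continuous_pairOmFun isClosed_Ggrp
  have him : Sset = (fun p : OmegaSG × OmegaSG => p.1 * p.2⁻¹) ''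
      {p : OmegaSG × OmegaSG | pairOm p.1 p.2 ∈ Ggrp} := by
    ext z
    constructor
    · rintro ⟨u, v, h, rfl⟩
      exact ⟨(u, v), h, rfl⟩
    · rintro ⟨⟨u, v⟩, h, rfl⟩
      exact ⟨u, v, h, rfl⟩
  rw [him]
  exact (hK.isCompact.image (continuous_fst.mul continuous_snd.inv)).isClosed

/-! ### Membership facts -/

lemma A1_mem_G : A1 ∈ Ggrp :=
  Subgroup.le_topologicalClosure _ (Subgroup.subset_closure (by simp))

lemma A3_mem_G : A3 ∈ Ggrp :=
  Subgroup.le_topologicalClosure _ (Subgroup.subset_closure (by simp))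

lemma A2_mem_G : A2 ∈ Ggrp := by
  rw [A2_eq]; exact mul_mem A1_mem_G (inv_mem A3_mem_G)

lemma G1_mem_U : A2 * A3⁻¹ ∈ Ugrp :=
  Subgroup.le_topologicalClosure _ (Subgroup.subset_closure ⟨1, one_mem _, by group⟩)

/-- `U` is stable under conjugation by elements of `G`. -/
lemma conj_mem_Ugrp {g z : OmegaSG} (hg : g ∈ Ggrp) (hz : z ∈ Ugrp) :
    g * z * g⁻¹ ∈ Ugrp := by
  set T : Set OmegaSG := {x | ∃ h ∈ Ggrp, x = h * (A2 * A3⁻¹) * h⁻¹} with hT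
  let φ : OmegaSG →* OmegaSG := (MulAut.conj g).toMonoidHom
  have hφc : Continuous φ := by
    show Continuous fun x : OmegaSG => g * x * g⁻¹
    exact (continuous_const.mul continuous_id).mul continuous_const
  have hmaps : ∀ x ∈ Subgroup.closure T, φ x ∈ Subgroup.closure T := by
    intro x hx
    induction hx using Subgroup.closure_induction with
    | mem y hy =>
      obtain ⟨h, hh, rfl⟩ := hy
      refine Subgroup.subset_closure ⟨g * h, mul_mem hg hh, ?_⟩
      show g * (h * (A2 * A3⁻¹) * h⁻¹) * g⁻¹ = _
      group
    | one => simpa using one_mem _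
    | mul a b _ _ ha hb => rw [map_mul]; exact mul_mem ha hb
    | inv a _ ha => rw [map_inv]; exact inv_mem ha
  have hz' : z ∈ closure ((Subgroup.closure T : Subgroup OmegaSG) : Set OmegaSG) := hz
  have : φ z ∈ closure (φ '' ((Subgroup.closure T : Subgroup OmegaSG) : Set OmegaSG)) :=
    image_closure_subset_closure_image hφc ⟨z, hz', rfl⟩
  have hsub : closure (φ '' ((Subgroup.closure T : Subgroup OmegaSG) : Set OmegaSG)) ⊆
      closure ((Subgroup.closure T : Subgroup OmegaSG) : Set OmegaSG) := by
    apply closure_mono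
    rintro _ ⟨x, hx, rfl⟩
    exact hmaps x hx
  exact hsub this

/-! ### Direction 1: `(u,v) ∈ G → u v⁻¹ ∈ U` -/

/-- The subgroup `N ≤ Ω × Ω` of pairs in `G × G` with `uv⁻¹ ∈ U`. -/
def Nsub : Subgroup (OmegaSG × OmegaSG) where
  carrier := {p | p.1 ∈ Ggrp ∧ p.2 ∈ Ggrp ∧ p.1 * p.2⁻¹ ∈ Ugrp}
  one_mem' := ⟨one_mem _, one_mem _, by simpa using one_mem _⟩
  mul_mem' := by
    rintro ⟨u, v⟩ ⟨u', v'⟩ ⟨hu, hv, hU⟩ ⟨hu', hv', hU'⟩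
    refine ⟨mul_mem hu hu', mul_mem hv hv', ?_⟩
    show (u * u') * (v * v')⁻¹ ∈ Ugrp
    have key : (u * u') * (v * v')⁻¹ = (u * (u' * v'⁻¹) * u⁻¹) * (u * v⁻¹) := by group
    rw [key]
    exact mul_mem (conj_mem_Ugrp hu hU') hU
  inv_mem' := by
    rintro ⟨u, v⟩ ⟨hu, hv, hU⟩
    refine ⟨inv_mem hu, inv_mem hv, ?_⟩
    show u⁻¹ * (v⁻¹)⁻¹ ∈ Ugrp
    have key : u⁻¹ * (v⁻¹)⁻¹ = u⁻¹ * (u * v⁻¹)⁻¹ * u := by group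
    rw [key]
    have := conj_mem_Ugrp (inv_mem hu) (inv_mem hU)
    simpa [mul_assoc] using this

lemma Nsub_swap {p : OmegaSG × OmegaSG} (hp : p ∈ Nsub) : (p.2, p.1) ∈ Nsub := by
  obtain ⟨hu, hv, hU⟩ := hp
  refine ⟨hv, hu, ?_⟩
  have key : p.2 * p.1⁻¹ = (p.1 * p.2⁻¹)⁻¹ := by group
  rw [key]
  exact inv_mem hU

lemma isClosed_Nsub : IsClosed (Nsub : Set (OmegaSG × OmegaSG)) := by
  have h1 : IsClosed {p : OmegaSG × OmegaSG | p.1 ∈ Ggrp} :=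
    isClosed_Ggrp.preimage continuous_fst
  have h2 : IsClosed {p : OmegaSG × OmegaSG | p.2 ∈ Ggrp} :=
    isClosed_Ggrp.preimage continuous_snd
  have h3 : IsClosed {p : OmegaSG × OmegaSG | p.1 * p.2⁻¹ ∈ Ugrp} :=
    isClosed_Ugrp.preimage (continuous_fst.mul continuous_snd.inv)
  exact h1.inter (h2.inter h3)
/-! ### The subgroup `P` and direction 1 -/

lemma pair_mul_sw (u v u' v' : OmegaSG) :
    pairOm u v * (A1 * pairOm u' v') = A1 * pairOm (v * u') (u * v') := by
  calc pairOm u v * (A1 * pairOm u' v')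
      = (A1 * A1) * pairOm u v * (A1 * pairOm u' v') := by rw [A1_mul_A1, one_mul]
    _ = A1 * (A1 * pairOm u v * A1) * pairOm u' v' := by group
    _ = A1 * pairOm v u * pairOm u' v' := by rw [A1_conj]
    _ = A1 * (pairOm v u * pairOm u' v') := by rw [mul_assoc]
    _ = A1 * pairOm (v * u') (u * v') := by rw [← pairOm_mul]

lemma sw_mul_pair (u v u' v' : OmegaSG) :
    (A1 * pairOm u v) * pairOm u' v' = A1 * pairOm (u * u') (v * v') := by
  rw [mul_assoc, ← pairOm_mul]

lemma sw_mul_sw (u v u' v' : OmegaSG) :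
    (A1 * pairOm u v) * (A1 * pairOm u' v') = pairOm (v * u') (u * v') := by
  calc (A1 * pairOm u v) * (A1 * pairOm u' v')
      = (A1 * pairOm u v * A1) * pairOm u' v' := by group
    _ = pairOm v u * pairOm u' v' := by rw [A1_conj]
    _ = pairOm (v * u') (u * v') := (pairOm_mul _ _ _ _).symm

lemma sw_inv (u v : OmegaSG) :
    (A1 * pairOm u v)⁻¹ = A1 * pairOm v⁻¹ u⁻¹ := by
  calc (A1 * pairOm u v)⁻¹ = (pairOm u v)⁻¹ * A1⁻¹ := by rw [mul_inv_rev]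
    _ = pairOm u⁻¹ v⁻¹ * A1 := by rw [← pairOm_inv, A1_inv]
    _ = (A1 * A1) * pairOm u⁻¹ v⁻¹ * A1 := by rw [A1_mul_A1, one_mul]
    _ = A1 * (A1 * pairOm u⁻¹ v⁻¹ * A1) := by group
    _ = A1 * pairOm v⁻¹ u⁻¹ := by rw [A1_conj]

/-- The subgroup `P = pair(N) ∪ a₁·pair(N)` of `Ω`. -/
def Psub : Subgroup OmegaSG where
  carrier := {z | ∃ p ∈ Nsub, z = pairOm p.1 p.2} ∪ {z | ∃ p ∈ Nsub, z = A1 * pairOm p.1 p.2}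
  one_mem' := Or.inl ⟨(1, 1), one_mem _, pairOm_one.symm⟩
  mul_mem' := by
    rintro x y (⟨p, hp, rfl⟩ | ⟨p, hp, rfl⟩) (⟨q, hq, rfl⟩ | ⟨q, hq, rfl⟩)
    · exact Or.inl ⟨p * q, mul_mem hp hq, (pairOm_mul _ _ _ _).symm⟩
    · exact Or.inr ⟨(p.2, p.1) * q, mul_mem (Nsub_swap hp) hq, pair_mul_sw _ _ _ _⟩
    · exact Or.inr ⟨p * q, mul_mem hp hq, sw_mul_pair _ _ _ _⟩
    · exact Or.inl ⟨(p.2, p.1) * q, mul_mem (Nsub_swap hp) hq, sw_mul_sw _ _ _ _⟩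
  inv_mem' := by
    rintro x (⟨p, hp, rfl⟩ | ⟨p, hp, rfl⟩)
    · exact Or.inl ⟨p⁻¹, inv_mem hp, pairOm_inv _ _⟩
    · exact Or.inr ⟨(p.2⁻¹, p.1⁻¹), Nsub_swap (inv_mem hp), sw_inv _ _⟩

lemma isClosed_Psub : IsClosed (Psub : Set OmegaSG) := by
  have h1 : {z : OmegaSG | ∃ p ∈ Nsub, z = pairOm p.1 p.2}
      = (fun p : OmegaSG × OmegaSG => pairOm p.1 p.2) '' (Nsub : Set (OmegaSG × OmegaSG)) := by
    ext z; exact ⟨fun ⟨p, hp, h⟩ => ⟨p, hp, h.symm⟩, fun ⟨p, hp, h⟩ => ⟨p, hp, h.symm⟩⟩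
  have h2 : {z : OmegaSG | ∃ p ∈ Nsub, z = A1 * pairOm p.1 p.2}
      = (fun p : OmegaSG × OmegaSG => A1 * pairOm p.1 p.2) '' (Nsub : Set (OmegaSG × OmegaSG)) := by
    ext z; exact ⟨fun ⟨p, hp, h⟩ => ⟨p, hp, h.symm⟩, fun ⟨p, hp, h⟩ => ⟨p, hp, h.symm⟩⟩
  have hNc : IsCompact (Nsub : Set (OmegaSG × OmegaSG)) := isClosed_Nsub.isCompact
  show IsClosed ({z : OmegaSG | ∃ p ∈ Nsub, z = pairOm p.1 p.2}
    ∪ {z : OmegaSG | ∃ p ∈ Nsub, z = A1 * pairOm p.1 p.2})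
  rw [h1, h2]
  exact ((hNc.image continuous_pairOmFun).union
    (hNc.image (continuous_const.mul continuous_pairOmFun))).isClosed

lemma G_le_Psub : Ggrp ≤ Psub := by
  apply Subgroup.topologicalClosure_minimal _ _ isClosed_Psub
  rw [Subgroup.closure_le]
  rintro x hx
  rcases hx with rfl | hx
  · exact Or.inr ⟨(1, 1), one_mem _, by rw [pairOm_one, mul_one]⟩
  · rcases hx with rfl
    exact Or.inl ⟨(A2, A3), ⟨A2_mem_G, A3_mem_G, G1_mem_U⟩, A3_eq⟩

lemma dir1 {u v : OmegaSG} (h : pairOm u v ∈ Ggrp) : u * v⁻¹ ∈ Ugrp := by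
  rcases G_le_Psub h with ⟨p, hp, heq⟩ | ⟨p, hp, heq⟩
  · obtain ⟨h1, h2⟩ := pairOm_inj heq
    rw [h1, h2]
    exact hp.2.2
  · exfalso
    have e1 : ((pairOm u v : OmegaSG) : Equiv.Perm Wd) [false] = [false] := by
      show pairFun (u : Equiv.Perm Wd) (v : Equiv.Perm Wd) (false :: ([] : Wd)) = [false]
      rw [pairFun_false, mem_omega_nil u.2]
    have e2 : ((A1 * pairOm p.1 p.2 : OmegaSG) : Equiv.Perm Wd) [false] = [true] := by
      show swapPerm (pairFun (p.1 : Equiv.Perm Wd) (p.2 : Equiv.Perm Wd) (false :: ([] : Wd)))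
        = [true]
      rw [pairFun_false, mem_omega_nil p.1.2, swapPerm_cons]
      rfl
    rw [heq, e2] at e1
    simp at e1
/-! ### Direction 2: `U ⊆ S` -/

/-- `V = ⟨γ₁, γ₂⟩`. -/
def Vsub : Subgroup OmegaSG := Subgroup.closure {A2 * A3⁻¹, A3⁻¹ * A2}

/-- `V̄`, the closure of `V`. -/
noncomputable def Vbar : Subgroup OmegaSG := Vsub.topologicalClosure

lemma G_comm : Commute (A2 * A3⁻¹) (A3⁻¹ * A2) := by
  show (A2 * A3⁻¹) * (A3⁻¹ * A2) = (A3⁻¹ * A2) * (A2 * A3⁻¹)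
  rw [A2_eq]
  exact rel_comm A1_mul_A1 A3_pow4 as_pow4

lemma cA1G1 : A1 * (A2 * A3⁻¹) * A1⁻¹ = (A2 * A3⁻¹)⁻¹ := by
  rw [A2_eq]; exact rel_s_g1 A1_mul_A1 A3_pow4

lemma cA1G2 : A1 * (A3⁻¹ * A2) * A1⁻¹ = (A3⁻¹ * A2)⁻¹ := by
  rw [A2_eq]; exact rel_s_g2 A1_mul_A1 as_pow4

lemma cA3G1 : A3 * (A2 * A3⁻¹) * A3⁻¹ = (A3⁻¹ * A2)⁻¹ := by
  rw [A2_eq]; exact rel_a_g1 A1_mul_A1 A3_pow4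

lemma cA3G2 : A3 * (A3⁻¹ * A2) * A3⁻¹ = A2 * A3⁻¹ := by
  rw [A2_eq]; exact rel_a_g2 A1 A3

lemma cA3iG1 : A3⁻¹ * (A2 * A3⁻¹) * A3 = A3⁻¹ * A2 := by
  rw [A2_eq]; exact rel_ai_g1 A1 A3

lemma cA3iG2 : A3⁻¹ * (A3⁻¹ * A2) * A3 = (A2 * A3⁻¹)⁻¹ := by
  rw [A2_eq]; exact rel_ai_g2 A1_mul_A1 A3_pow4

/-- Generic conjugation-stability of a closed generated subgroup. -/
lemma conj_topClosure {g : OmegaSG} {T : Set OmegaSG}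
    (hT : ∀ x ∈ T, g * x * g⁻¹ ∈ Subgroup.closure T) :
    ∀ z ∈ (Subgroup.closure T).topologicalClosure, g * z * g⁻¹ ∈
      (Subgroup.closure T).topologicalClosure := by
  intro z hz
  let φ : OmegaSG →* OmegaSG := (MulAut.conj g).toMonoidHom
  have hφc : Continuous φ := by
    show Continuous fun x : OmegaSG => g * x * g⁻¹
    exact (continuous_const.mul continuous_id).mul continuous_const
  have hmaps : ∀ x ∈ Subgroup.closure T, φ x ∈ Subgroup.closure T := by
    intro x hx
    induction hx using Subgroup.closure_induction with
    | mem y hy => exact hT y hy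
    | one => simpa using one_mem _
    | mul a b _ _ ha hb => rw [map_mul]; exact mul_mem ha hb
    | inv a _ ha => rw [map_inv]; exact inv_mem ha
  have hz' : z ∈ closure ((Subgroup.closure T : Subgroup OmegaSG) : Set OmegaSG) := hz
  have himg : φ z ∈ closure (φ '' ((Subgroup.closure T : Subgroup OmegaSG) : Set OmegaSG)) :=
    image_closure_subset_closure_image hφc ⟨z, hz', rfl⟩
  have hsub : closure (φ '' ((Subgroup.closure T : Subgroup OmegaSG) : Set OmegaSG)) ⊆
      closure ((Subgroup.closure T : Subgroup OmegaSG) : Set OmegaSG) := by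
    apply closure_mono
    rintro _ ⟨x, hx, rfl⟩
    exact hmaps x hx
  exact hsub himg

/-- The normalizing closed subgroup `W`. -/
def Wsub : Subgroup OmegaSG where
  carrier := {g | (∀ z ∈ Vbar, g * z * g⁻¹ ∈ Vbar) ∧ (∀ z ∈ Vbar, g⁻¹ * z * g ∈ Vbar)}
  one_mem' := ⟨fun z hz => by simpa using hz, fun z hz => by simpa using hz⟩
  mul_mem' := by
    rintro x y ⟨hx1, hx2⟩ ⟨hy1, hy2⟩
    constructor
    · intro z hz
      have key : (x * y) * z * (x * y)⁻¹ = x * (y * z * y⁻¹) * x⁻¹ := by group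
      rw [key]
      exact hx1 _ (hy1 z hz)
    · intro z hz
      have key : (x * y)⁻¹ * z * (x * y) = y⁻¹ * (x⁻¹ * z * x) * y := by group
      rw [key]
      exact hy2 _ (hx2 z hz)
  inv_mem' := by
    rintro x ⟨hx1, hx2⟩
    constructor
    · intro z hz
      rw [inv_inv]
      exact hx2 z hz
    · intro z hz
      rw [inv_inv]
      exact hx1 z hz

lemma isClosed_Vbar : IsClosed (Vbar : Set OmegaSG) :=
  Subgroup.isClosed_topologicalClosure _

lemma isClosed_Wsub : IsClosed (Wsub : Set OmegaSG) := by
  have hset : (Wsub : Set OmegaSG) =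
      (⋂ z ∈ (Vbar : Set OmegaSG), {g : OmegaSG | g * z * g⁻¹ ∈ Vbar}) ∩
      (⋂ z ∈ (Vbar : Set OmegaSG), {g : OmegaSG | g⁻¹ * z * g ∈ Vbar}) := by
    ext g
    simp only [Set.mem_inter_iff, Set.mem_iInter, Set.mem_setOf_eq]
    rfl
  rw [hset]
  refine IsClosed.inter ?_ ?_ <;>
    refine isClosed_biInter fun z _ => ?_
  · exact isClosed_Vbar.preimage ((continuous_id.mul continuous_const).mul continuous_inv)
  · exact isClosed_Vbar.preimage ((continuous_inv.mul continuous_const).mul continuous_id)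

lemma G1_mem_Vsub : A2 * A3⁻¹ ∈ Vsub := Subgroup.subset_closure (by simp)
lemma G2_mem_Vsub : A3⁻¹ * A2 ∈ Vsub := Subgroup.subset_closure (by simp)

lemma conj_Vbar_of_gen {g : OmegaSG}
    (h1 : g * (A2 * A3⁻¹) * g⁻¹ ∈ Vsub) (h2 : g * (A3⁻¹ * A2) * g⁻¹ ∈ Vsub) :
    ∀ z ∈ Vbar, g * z * g⁻¹ ∈ Vbar := by
  intro z hz
  refine conj_topClosure ?_ z hz
  rintro x (rfl | hx)
  · exact h1
  · rcases hx with rfl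
    exact h2

lemma G_le_Wsub : Ggrp ≤ Wsub := by
  apply Subgroup.topologicalClosure_minimal _ _ isClosed_Wsub
  rw [Subgroup.closure_le]
  rintro x (rfl | hx)
  · constructor
    · exact conj_Vbar_of_gen (by rw [cA1G1]; exact inv_mem G1_mem_Vsub)
        (by rw [cA1G2]; exact inv_mem G2_mem_Vsub)
    · intro z hz
      rw [A1_inv, show A1 * z * A1 = A1 * z * A1⁻¹ by rw [A1_inv]]
      exact conj_Vbar_of_gen (by rw [cA1G1]; exact inv_mem G1_mem_Vsub)
        (by rw [cA1G2]; exact inv_mem G2_mem_Vsub) z hz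
  · rcases hx with rfl
    constructor
    · exact conj_Vbar_of_gen (by rw [cA3G1]; exact inv_mem G2_mem_Vsub)
        (by rw [cA3G2]; exact G1_mem_Vsub)
    · intro z hz
      rw [show A3⁻¹ * z * A3 = A3⁻¹ * z * (A3⁻¹)⁻¹ by rw [inv_inv]]
      exact conj_Vbar_of_gen
        (by rw [show A3⁻¹ * (A2 * A3⁻¹) * (A3⁻¹)⁻¹ = A3⁻¹ * (A2 * A3⁻¹) * A3 by rw [inv_inv],
          cA3iG1]; exact G2_mem_Vsub)
        (by rw [show A3⁻¹ * (A3⁻¹ * A2) * (A3⁻¹)⁻¹ = A3⁻¹ * (A3⁻¹ * A2) * A3 by rw [inv_inv],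
          cA3iG2]; exact inv_mem G1_mem_Vsub) z hz

lemma U_le_Vbar : Ugrp ≤ Vbar := by
  apply Subgroup.topologicalClosure_minimal _ _ isClosed_Vbar
  rw [Subgroup.closure_le]
  rintro x ⟨g, hg, rfl⟩
  have hW := G_le_Wsub hg
  exact hW.1 _ (Subgroup.le_topologicalClosure _ G1_mem_Vsub)
/-! ### Explicit elements of `S` -/

lemma pairOm_zpow (x y : OmegaSG) (n : ℤ) : (pairOm x y) ^ n = pairOm (x ^ n) (y ^ n) := by
  induction n using Int.induction_on with
  | zero => simp only [zpow_zero]; exact pairOm_one.symm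
  | succ k ih =>
    rw [zpow_add_one, ih, zpow_add_one, zpow_add_one, pairOm_mul]
  | pred k ih =>
    rw [zpow_sub_one, ih, zpow_sub_one, zpow_sub_one, ← pairOm_inv, pairOm_mul]

lemma X_pair : pairOm (A2 * A3⁻¹) (A2 * A3⁻¹)⁻¹ = A3 * (A1 * A3 * A1)⁻¹ := by
  rw [show (A2 * A3⁻¹)⁻¹ = A3 * A2⁻¹ by simp [mul_inv_rev]]
  rw [pairOm_mul A2 A3 A3⁻¹ A2⁻¹, pairOm_inv A3 A2, ← A3_eq, ← sA3s]

lemma X_mem : pairOm (A2 * A3⁻¹) (A2 * A3⁻¹)⁻¹ ∈ Ggrp := by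
  rw [X_pair]
  exact mul_mem A3_mem_G (inv_mem (mul_mem (mul_mem A1_mem_G A3_mem_G) A1_mem_G))

lemma Y_pair : pairOm (A3⁻¹ * A2) (A3⁻¹ * A2)⁻¹ = (A1 * A3 * A1)⁻¹ * A3 := by
  rw [show (A3⁻¹ * A2)⁻¹ = A2⁻¹ * A3 by simp [mul_inv_rev]]
  rw [pairOm_mul A3⁻¹ A2⁻¹ A2 A3, pairOm_inv A3 A2, ← A3_eq, ← sA3s]

lemma Y_mem : pairOm (A3⁻¹ * A2) (A3⁻¹ * A2)⁻¹ ∈ Ggrp := by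
  rw [Y_pair]
  exact mul_mem (inv_mem (mul_mem (mul_mem A1_mem_G A3_mem_G) A1_mem_G)) A3_mem_G

lemma pair_uv_mem (i j k : ℤ) :
    pairOm ((A2 * A3⁻¹) ^ i * (A3⁻¹ * A2) ^ j * A2 ^ k)
      (((A2 * A3⁻¹) ^ i)⁻¹ * ((A3⁻¹ * A2) ^ j)⁻¹ * A3 ^ k) ∈ Ggrp := by
  rw [← inv_zpow (A2 * A3⁻¹) i, ← inv_zpow (A3⁻¹ * A2) j]
  rw [pairOm_mul, pairOm_mul, ← pairOm_zpow, ← pairOm_zpow, ← pairOm_zpow]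
  refine mul_mem (mul_mem (zpow_mem X_mem i) (zpow_mem Y_mem j)) ?_
  rw [← A3_eq]
  exact zpow_mem A3_mem_G k

lemma habel (a b a' b' : ℤ) :
    ((A2 * A3⁻¹) ^ a * (A3⁻¹ * A2) ^ b) * ((A2 * A3⁻¹) ^ a' * (A3⁻¹ * A2) ^ b')
      = (A2 * A3⁻¹) ^ (a + a') * (A3⁻¹ * A2) ^ (b + b') := by
  have hcom : (A2 * A3⁻¹) ^ a' * (A3⁻¹ * A2) ^ b = (A3⁻¹ * A2) ^ b * (A2 * A3⁻¹) ^ a' :=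
    (G_comm.zpow_zpow a' b).eq
  calc ((A2 * A3⁻¹) ^ a * (A3⁻¹ * A2) ^ b) * ((A2 * A3⁻¹) ^ a' * (A3⁻¹ * A2) ^ b')
      = (A2 * A3⁻¹) ^ a * ((A3⁻¹ * A2) ^ b * (A2 * A3⁻¹) ^ a') * (A3⁻¹ * A2) ^ b' := by group
    _ = (A2 * A3⁻¹) ^ a * ((A2 * A3⁻¹) ^ a' * (A3⁻¹ * A2) ^ b) * (A3⁻¹ * A2) ^ b' := by
        rw [← hcom]
    _ = ((A2 * A3⁻¹) ^ a * (A2 * A3⁻¹) ^ a') * ((A3⁻¹ * A2) ^ b * (A3⁻¹ * A2) ^ b') := by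
        group
    _ = (A2 * A3⁻¹) ^ (a + a') * (A3⁻¹ * A2) ^ (b + b') := by rw [← zpow_add, ← zpow_add]

lemma Sset_form (i j k p q : ℤ)
    (hck : A2 ^ k * (A3 ^ k)⁻¹ = (A2 * A3⁻¹) ^ p * (A3⁻¹ * A2) ^ q) :
    (A2 * A3⁻¹) ^ (2 * i + p) * (A3⁻¹ * A2) ^ (2 * j + q) ∈ Sset := by
  refine ⟨(A2 * A3⁻¹) ^ i * (A3⁻¹ * A2) ^ j * A2 ^ k,
    ((A2 * A3⁻¹) ^ i)⁻¹ * ((A3⁻¹ * A2) ^ j)⁻¹ * A3 ^ k, pair_uv_mem i j k, ?_⟩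
  have h1 : ((A2 * A3⁻¹) ^ i * (A3⁻¹ * A2) ^ j * A2 ^ k) *
      (((A2 * A3⁻¹) ^ i)⁻¹ * ((A3⁻¹ * A2) ^ j)⁻¹ * A3 ^ k)⁻¹
      = (A2 * A3⁻¹) ^ i * (A3⁻¹ * A2) ^ j * (A2 ^ k * (A3 ^ k)⁻¹) *
        ((A3⁻¹ * A2) ^ j * (A2 * A3⁻¹) ^ i) := by group
  have h3 : (A3⁻¹ * A2) ^ j * (A2 * A3⁻¹) ^ i = (A2 * A3⁻¹) ^ i * (A3⁻¹ * A2) ^ j :=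
    ((G_comm.zpow_zpow i j).eq).symm
  rw [h1, hck, h3]
  have h2 : (A2 * A3⁻¹) ^ i * (A3⁻¹ * A2) ^ j *
      ((A2 * A3⁻¹) ^ p * (A3⁻¹ * A2) ^ q) * ((A2 * A3⁻¹) ^ i * (A3⁻¹ * A2) ^ j)
      = ((A2 * A3⁻¹) ^ i * (A3⁻¹ * A2) ^ j) * (((A2 * A3⁻¹) ^ p * (A3⁻¹ * A2) ^ q) *
        ((A2 * A3⁻¹) ^ i * (A3⁻¹ * A2) ^ j)) := by group
  rw [h2, habel p q i j, habel i j (p + i) (q + j),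
    show i + (p + i) = 2 * i + p by ring, show j + (q + j) = 2 * j + q by ring]

lemma hc0 : A2 ^ (0 : ℤ) * (A3 ^ (0 : ℤ))⁻¹
    = (A2 * A3⁻¹) ^ (0 : ℤ) * (A3⁻¹ * A2) ^ (0 : ℤ) := by simp

lemma hc1 : A2 ^ (1 : ℤ) * (A3 ^ (1 : ℤ))⁻¹
    = (A2 * A3⁻¹) ^ (1 : ℤ) * (A3⁻¹ * A2) ^ (0 : ℤ) := by simp

lemma hc2z : A2 ^ (2 : ℤ) * (A3 ^ (2 : ℤ))⁻¹
    = (A2 * A3⁻¹) ^ (1 : ℤ) * (A3⁻¹ * A2) ^ (-1 : ℤ) := by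
  have h' : A2 * A2 * (A3⁻¹ * A3⁻¹) = (A3⁻¹ * A2)⁻¹ * (A2 * A3⁻¹) := by
    rw [A2_eq]
    exact rel_c2 A1_mul_A1 as_pow4
  calc A2 ^ (2 : ℤ) * (A3 ^ (2 : ℤ))⁻¹
      = A2 * A2 * (A3⁻¹ * A3⁻¹) := by
        rw [show (2 : ℤ) = 1 + 1 by norm_num]
        simp only [zpow_add, zpow_one, mul_inv_rev]
    _ = (A3⁻¹ * A2)⁻¹ * (A2 * A3⁻¹) := h'
    _ = (A2 * A3⁻¹) * (A3⁻¹ * A2)⁻¹ := (G_comm.inv_right.eq).symm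
    _ = (A2 * A3⁻¹) ^ (1 : ℤ) * (A3⁻¹ * A2) ^ (-1 : ℤ) := by rw [zpow_one, zpow_neg_one]

lemma hc3z : A2 ^ (3 : ℤ) * (A3 ^ (3 : ℤ))⁻¹
    = (A2 * A3⁻¹) ^ (0 : ℤ) * (A3⁻¹ * A2) ^ (-1 : ℤ) := by
  have h' : A2 * A2 * A2 * (A3⁻¹ * A3⁻¹ * A3⁻¹) = (A3⁻¹ * A2)⁻¹ := by
    rw [A2_eq]
    exact rel_c3 A1_mul_A1 A3_pow4 as_pow4
  calc A2 ^ (3 : ℤ) * (A3 ^ (3 : ℤ))⁻¹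
      = A2 * A2 * A2 * (A3⁻¹ * (A3⁻¹ * A3⁻¹)) := by
        rw [show (3 : ℤ) = 1 + 1 + 1 by norm_num]
        simp only [zpow_add, zpow_one, mul_inv_rev]
    _ = A2 * A2 * A2 * (A3⁻¹ * A3⁻¹ * A3⁻¹) := by
        rw [show A3⁻¹ * (A3⁻¹ * A3⁻¹) = A3⁻¹ * A3⁻¹ * A3⁻¹ from (mul_assoc _ _ _).symm]
    _ = (A3⁻¹ * A2)⁻¹ := h'
    _ = (A2 * A3⁻¹) ^ (0 : ℤ) * (A3⁻¹ * A2) ^ (-1 : ℤ) := by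
        rw [zpow_zero, zpow_neg_one, one_mul]

lemma zpow_mem_Sset (m n : ℤ) : (A2 * A3⁻¹) ^ m * (A3⁻¹ * A2) ^ n ∈ Sset := by
  rcases Int.even_or_odd m with ⟨i, hi⟩ | ⟨i, hi⟩ <;>
    rcases Int.even_or_odd n with ⟨j, hj⟩ | ⟨j, hj⟩
  · rw [show m = 2 * i + 0 by omega, show n = 2 * j + 0 by omega]
    exact Sset_form i j 0 0 0 hc0
  · rw [show m = 2 * i + 0 by omega, show n = 2 * (j + 1) + (-1) by omega]
    exact Sset_form i (j + 1) 3 0 (-1) hc3z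
  · rw [show m = 2 * i + 1 by omega, show n = 2 * j + 0 by omega]
    exact Sset_form i j 1 1 0 hc1
  · rw [show m = 2 * i + 1 by omega, show n = 2 * (j + 1) + (-1) by omega]
    exact Sset_form i (j + 1) 2 1 (-1) hc2z

lemma mem_Vsub_form {z : OmegaSG} (hz : z ∈ Vsub) :
    ∃ m n : ℤ, z = (A2 * A3⁻¹) ^ m * (A3⁻¹ * A2) ^ n := by
  induction hz using Subgroup.closure_induction with
  | mem w hw =>
    rcases hw with rfl | hw
    · exact ⟨1, 0, by simp⟩
    · rcases hw with rfl
      exact ⟨0, 1, by simp⟩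
  | one => exact ⟨0, 0, by simp⟩
  | mul a b _ _ ha hb =>
    obtain ⟨m, n, rfl⟩ := ha
    obtain ⟨m', n', rfl⟩ := hb
    exact ⟨m + m', n + n', habel m n m' n'⟩
  | inv a _ ha =>
    obtain ⟨m, n, rfl⟩ := ha
    refine ⟨-m, -n, ?_⟩
    rw [mul_inv_rev, ← zpow_neg, ← zpow_neg]
    exact (G_comm.zpow_zpow (-m) (-n)).eq.symm
/-- `U = { uv⁻¹ : (u,v) ∈ G }`. -/
theorem stmt13 : ∀ z : OmegaSG,
    z ∈ Ugrp ↔ ∃ u v : OmegaSG, pairOm u v ∈ Ggrp ∧ z = u * v⁻¹ := by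
  intro z
  constructor
  · intro hz
    have hzV : z ∈ Vbar := U_le_Vbar hz
    have hsub : (Vsub : Set OmegaSG) ⊆ Sset := by
      intro w hw
      obtain ⟨m, n, rfl⟩ := mem_Vsub_form hw
      exact zpow_mem_Sset m n
    have hz' : z ∈ closure (Vsub : Set OmegaSG) := hzV
    exact closure_minimal hsub isClosed_Sset hz'
  · rintro ⟨u, v, h, rfl⟩
    exact dir1 h
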